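/- Let R be a finite reduced commutative ring with identity that is not an integral domain, and suppose the compressed zero-divisor graph Γ_E(R) contains no cycle (i.e., its girth is infinite). Then Γ_E(R) has exactly two vertices, which are adjacent, and Ddim(Γ_E(R)) = 1. -/

import Mathlib

open SimpleGraph

/-- `Zstar R` is the set of nonzero zero-divisors of the commutative ring `R`. -/
def Zstar (R : Type*) [CommRing R] : Set R :=
  {x : R | x ≠ 0 ∧ ∃ y : R, y ≠ 0 ∧ x * y = 0}

/-- `annSet R x` is the annihilator of `x`, i.e. `{y : R | x * y = 0}`. -/
def annSet (R : Type*) [CommRing R] (x : R) : Set R :=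
  {y : R | x * y = 0}

/-- Two nonzero zero-divisors are equivalent iff they have the same annihilator. -/
instance zdvSetoid (R : Type*) [CommRing R] : Setoid (Zstar R) :=
  ⟨fun a b => annSet R a.1 = annSet R b.1, ⟨fun _ => rfl, Eq.symm, Eq.trans⟩⟩

/-- The vertices of the compressed zero-divisor graph `Γ_E(R)`: equivalence
classes `[x]` of nonzero zero-divisors under equality of annihilators. -/
abbrev CZDVertex (R : Type*) [CommRing R] : Type _ :=
  Quotient (zdvSetoid R)

/-- The compressed zero-divisor graph `Γ_E(R)`: distinct classes `[x]` and `[y]`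
are adjacent iff `x * y = 0` (which is independent of the chosen representatives). -/
def CZDG (R : Type*) [CommRing R] : SimpleGraph (CZDVertex R) where
  Adj u v := u ≠ v ∧ ∃ a b : Zstar R,
    (⟦a⟧ : CZDVertex R) = u ∧ (⟦b⟧ : CZDVertex R) = v ∧ (a : R) * b = 0
  symm := by
    refine ⟨?_⟩
    rintro u v ⟨huv, a, b, ha, hb, hab⟩
    exact ⟨huv.symm, b, a, hb, ha, by rwa [mul_comm]⟩
  loopless := by
    refine ⟨?_⟩
    rintro u ⟨h, -⟩
    exact h rfl

/-- A set `W` of vertices is resolving if any two distinct vertices have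
different distance to some vertex of `W`. -/
def IsResolving {V : Type*} (G : SimpleGraph V) (W : Set V) : Prop :=
  ∀ u v : V, u ≠ v → ∃ w ∈ W, G.dist u w ≠ G.dist v w

/-- A set `W` of vertices is dominating if every vertex outside `W` is adjacent
to some vertex of `W`. -/
def IsDominating {V : Type*} (G : SimpleGraph V) (W : Set V) : Prop :=
  ∀ v : V, v ∉ W → ∃ w ∈ W, G.Adj v w

/-- The dominant metric dimension `Ddim G`: the minimum cardinality of a set of
vertices that is simultaneously resolving and dominating, with the convention
that it is `0` for a graph with exactly one vertex. -/
noncomputable def Ddim {V : Type*} (G : SimpleGraph V) : ℕ∞ :=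
  if Nat.card V = 1 then 0
  else sInf {n : ℕ∞ | ∃ W : Set V, IsResolving G W ∧ IsDominating G W ∧ W.encard = n}

/-!
In a finite ring some positive power `x ^ k` of every element is idempotent, and in a reduced
ring `x ^ k` has the same annihilator as `x`; so every vertex of `Γ_E(R)` is the class of an
idempotent other than `0` and `1`. For two such idempotents `e` and `f`, unless `e f ∈ {0, e}`
the elements `e f`, `e (1 - f)` and `1 - e` are nonzero and pairwise orthogonal, so they span a
triangle. Hence when `Γ_E(R)` is acyclic every such idempotent is `e` or `1 - e`, and `Γ_E(R)`
is the single edge `[e] — [1 - e]`.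
-/

open Function

lemma exists_pos_isIdempotentElem_pow {M : Type*} [Monoid M] [Finite M] (a : M) :
    ∃ k, 0 < k ∧ IsIdempotentElem (a ^ k) := by
  obtain ⟨m, n, hmn, h⟩ := Set.finite_univ.exists_lt_map_eq_of_forall_mem
    (f := fun n : ℕ ↦ a ^ n) fun _ ↦ Set.mem_univ _
  have hper : IsPeriodicPt (a * ·) (n - m) (a ^ m) := by
    simp only [IsPeriodicPt, IsFixedPt, mul_left_iterate, ← pow_add, Nat.sub_add_cancel hmn.le]
    exact h.symm
  have hpos : 0 < n - m := Nat.sub_pos_of_lt hmn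
  have hmk : m ≤ (n - m) * (m + 1) := by nlinarith
  -- `a ^ k` is idempotent as soon as `k ≥ m` is a multiple of the period `n - m`
  refine ⟨(n - m) * (m + 1), by positivity, ?_⟩
  have := (hper.apply_iterate ((n - m) * (m + 1) - m)).mul_const (m + 1)
  simpa only [IsIdempotentElem, IsPeriodicPt, IsFixedPt, mul_left_iterate, ← pow_add,
    Nat.sub_add_cancel hmk] using this

lemma annSet_pow {R : Type*} [CommRing R] [IsReduced R] (a : R) {k : ℕ} (hk : k ≠ 0) :
    annSet R (a ^ k) = annSet R a := by
  ext y
  obtain ⟨j, rfl⟩ := Nat.exists_eq_succ_of_ne_zero hk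
  simp only [annSet, Set.mem_ofPred_eq]
  refine ⟨fun h ↦ eq_zero_of_pow_eq_zero (n := j + 1) ?_, fun h ↦ ?_⟩
  · rw [mul_pow, pow_succ y, mul_left_comm, h, mul_zero]
  · rw [pow_succ, mul_assoc, h, mul_zero]

lemma exists_isIdempotentElem_annSet_eq {R : Type*} [CommRing R] [Finite R] [IsReduced R]
    {x : R} (hx : x ∈ Zstar R) :
    ∃ f : R, IsIdempotentElem f ∧ f ≠ 0 ∧ f ≠ 1 ∧ annSet R f = annSet R x := by
  obtain ⟨hx0, y, hy0, hxy⟩ := hx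
  obtain ⟨k, hk, hf⟩ := exists_pos_isIdempotentElem_pow x
  have hann := annSet_pow x hk.ne'
  refine ⟨x ^ k, hf, fun h ↦ hx0 (eq_zero_of_pow_eq_zero h), fun h ↦ hy0 ?_, hann⟩
  have hy : y ∈ annSet R (x ^ k) := hann ▸ hxy
  simpa [annSet, h] using hy

namespace CZDG

variable {R : Type*} [CommRing R]

lemma adj_mk_of_mul_eq_zero {x y : R} (hx : x ∈ Zstar R) (hy : y ∈ Zstar R)
    (hxx : x * x ≠ 0) (hxy : x * y = 0) : (CZDG R).Adj ⟦⟨x, hx⟩⟧ ⟦⟨y, hy⟩⟧ := by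
  refine ⟨fun h ↦ hxx ?_, ⟨x, hx⟩, ⟨y, hy⟩, rfl, rfl, hxy⟩
  have hx' : x ∈ annSet R y := (mul_comm y x).trans hxy
  rwa [← Quotient.exact h] at hx'

lemma not_isAcyclic_of_mul_eq_zero {x y z : R} (hx : x * x ≠ 0) (hy : y * y ≠ 0) (hz : z ≠ 0)
    (hxy : x * y = 0) (hxz : x * z = 0) (hyz : y * z = 0) : ¬(CZDG R).IsAcyclic := by
  classical
  have mx : x ∈ Zstar R := ⟨left_ne_zero_of_mul hx, y, left_ne_zero_of_mul hy, hxy⟩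
  have my : y ∈ Zstar R := ⟨left_ne_zero_of_mul hy, z, hz, hyz⟩
  have mz : z ∈ Zstar R := ⟨hz, x, left_ne_zero_of_mul hx, by rw [mul_comm, hxz]⟩
  intro hacyc
  refine hacyc.cliqueFree le_rfl {⟦⟨x, mx⟩⟧, ⟦⟨y, my⟩⟧, ⟦⟨z, mz⟩⟧}
    (is3Clique_triple_iff.mpr ⟨?_, ?_, ?_⟩)
  · exact adj_mk_of_mul_eq_zero mx my hx hxy
  · exact adj_mk_of_mul_eq_zero mx mz hx hxz
  · exact adj_mk_of_mul_eq_zero my mz hy hyz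

end CZDG

namespace IsIdempotentElem

variable {R : Type*} [CommRing R] {e f : R}

lemma mul_eq_zero_or_mul_eq_self_of_isAcyclic (hacyc : (CZDG R).IsAcyclic)
    (he : IsIdempotentElem e) (hf : IsIdempotentElem f) (he1 : e ≠ 1) :
    e * f = 0 ∨ e * f = e := by
  by_contra! h
  obtain ⟨hef0, hefe⟩ := h
  have hef1 : e * (1 - f) ≠ 0 := fun h ↦ hefe (by linear_combination -h)
  refine CZDG.not_isAcyclic_of_mul_eq_zero (x := e * f) (y := e * (1 - f)) (z := 1 - e)
    (by rwa [(he.mul hf).eq]) (by rwa [(he.mul hf.one_sub).eq]) (sub_ne_zero.mpr he1.symm)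
    ?_ ?_ ?_ hacyc
  · linear_combination (-(e * e)) * hf.eq
  · linear_combination (-f) * he.eq
  · linear_combination (f - 1) * he.eq

lemma eq_or_eq_one_sub_of_isAcyclic (hacyc : (CZDG R).IsAcyclic)
    (he : IsIdempotentElem e) (hf : IsIdempotentElem f) (he0 : e ≠ 0) (he1 : e ≠ 1)
    (hf0 : f ≠ 0) (hf1 : f ≠ 1) : f = e ∨ f = 1 - e := by
  rcases he.mul_eq_zero_or_mul_eq_self_of_isAcyclic hacyc hf he1 with hef | hef
  · rcases he.one_sub.mul_eq_zero_or_mul_eq_self_of_isAcyclic hacyc hf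
      (fun h ↦ he0 (sub_eq_self.mp h)) with h | h
    · exact absurd (by linear_combination hef + h) hf0
    · exact Or.inr (by linear_combination hef + h)
  · rcases hf.mul_eq_zero_or_mul_eq_self_of_isAcyclic hacyc he hf1 with h | h
    · exact absurd (by linear_combination h - hef) he0
    · exact Or.inl (by linear_combination hef - h)

end IsIdempotentElem

lemma ddim_eq_one_of_adj_of_forall_eq_or_eq {V : Type*} {G : SimpleGraph V} {u v : V}
    (hadj : G.Adj u v) (hV : ∀ w, w = u ∨ w = v) : Ddim G = 1 := by
  have hcard : Nat.card V ≠ 1 := fun h ↦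
    hadj.ne ((Nat.card_eq_one_iff_unique.mp h).1.elim u v)
  have hres : IsResolving G {u} := by
    intro p q hpq
    refine ⟨u, rfl, ?_⟩
    have hvu : G.dist v u = 1 := dist_eq_one_iff_adj.mpr hadj.symm
    rcases hV p with rfl | rfl <;> rcases hV q with rfl | rfl <;> simp [hvu] at hpq ⊢
  have hdom : IsDominating G {u} := fun p hp ↦
    ⟨u, rfl, (hV p).resolve_left hp ▸ hadj.symm⟩
  rw [Ddim, if_neg hcard]
  refine le_antisymm (sInf_le ⟨{u}, hres, hdom, Set.encard_singleton u⟩) (le_sInf ?_)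
  rintro _ ⟨W, -, hW, rfl⟩
  rw [Set.one_le_encard_iff_nonempty]
  by_cases hu : u ∈ W
  · exact ⟨u, hu⟩
  · obtain ⟨w, hw, -⟩ := hW u hu
    exact ⟨w, hw⟩

/-- If `R` is a finite reduced commutative ring that is not an
integral domain and `Γ_E(R)` contains no cycle (its girth is infinite), then
`Γ_E(R)` has exactly two vertices, which are adjacent, and `Ddim (Γ_E R) = 1`. -/
theorem stmt_16 (R : Type*) [CommRing R] [Finite R] [IsReduced R] [Nontrivial R]
    (hd : ¬IsDomain R) (hg : (CZDG R).egirth = ⊤) :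
    ∃ u v : CZDVertex R, u ≠ v ∧ (∀ w : CZDVertex R, w = u ∨ w = v) ∧
      (CZDG R).Adj u v ∧ Ddim (CZDG R) = 1 := by
  have hacyc : (CZDG R).IsAcyclic := egirth_eq_top.mp hg
  obtain ⟨a, ha, b, hab, hb⟩ : ∃ a : R, a ≠ 0 ∧ ∃ b : R, a * b = 0 ∧ b ≠ 0 := by
    have : ¬NoZeroDivisors R := fun _ ↦ hd (NoZeroDivisors.to_isDomain R)
    simpa [noZeroDivisors_iff_right_eq_zero_of_mul] using this
  obtain ⟨e, he, he0, he1, -⟩ := exists_isIdempotentElem_annSet_eq ⟨ha, b, hb, hab⟩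
  have he1' : 1 - e ≠ 0 := sub_ne_zero.mpr he1.symm
  have me : e ∈ Zstar R := ⟨he0, 1 - e, he1', he.mul_one_sub_self⟩
  have me' : 1 - e ∈ Zstar R := ⟨he1', e, he0, he.one_sub_mul_self⟩
  have hadj : (CZDG R).Adj ⟦⟨e, me⟩⟧ ⟦⟨1 - e, me'⟩⟧ :=
    CZDG.adj_mk_of_mul_eq_zero me me' (by rwa [he.eq]) he.mul_one_sub_self
  have hV : ∀ w : CZDVertex R, w = ⟦⟨e, me⟩⟧ ∨ w = ⟦⟨1 - e, me'⟩⟧ := by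
    refine Quotient.ind fun ⟨x, hx⟩ ↦ ?_
    obtain ⟨f, hf, hf0, hf1, hfx⟩ := exists_isIdempotentElem_annSet_eq hx
    rcases he.eq_or_eq_one_sub_of_isAcyclic hacyc hf he0 he1 hf0 hf1 with rfl | rfl
    · exact Or.inl (Quotient.sound hfx.symm)
    · exact Or.inr (Quotient.sound hfx.symm)
  exact ⟨_, _, hadj.ne, hV, hadj, ddim_eq_one_of_adj_of_forall_eq_or_eq hadj hV⟩
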